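/- arXiv:1210.4433 — 3 statements merged into one kernel-verified Lean document; each statement's English description precedes it below -/
import Mathlib

section
/- Let Λ = {λ_n} with λ_n = n·γ_n, where {γ_n} is a nonincreasing sequence of positive numbers. If ∑_{n=1}^∞ γ_n/n < ∞, then every function f of bounded partial Λ-variation has bounded harmonic variation, i.e. PΛBV ⊆ HBV; more precisely, HV_{1,2}(f) ≤ C·(ΛV_1(f) + ΛV_2(f)) for a constant C depending only on Λ, so ΛV_1(f)+ΛV_2(f) < ∞ implies HV_1(f)+HV_2(f)+HV_{1,2}(f) < ∞. -/
open Real Filter Topology MeasureTheory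
open scoped ENNReal NNReal BigOperators

noncomputable section

/-- `f` is `2π`-periodic in each variable. -/
def Periodic2 (f : ℝ → ℝ → ℝ) : Prop :=
  ∀ x y : ℝ, f (x + 2 * π) y = f x y ∧ f x (y + 2 * π) = f x y

/-- A finite family of pairwise nonoverlapping (nondegenerate) subintervals of `[0, 2π]`,
each interval given by its pair (left endpoint, right endpoint). -/
def Nonoverlapping {n : ℕ} (I : Fin n → ℝ × ℝ) : Prop :=
  (∀ i, 0 ≤ (I i).1 ∧ (I i).1 < (I i).2 ∧ (I i).2 ≤ 2 * π) ∧
  (∀ i j, i ≠ j → (I i).2 ≤ (I j).1 ∨ (I j).2 ≤ (I i).1)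

/-- `f(I, y) = f(b, y) - f(a, y)` for `I = (a, b)`. -/
def incr1 (f : ℝ → ℝ → ℝ) (I : ℝ × ℝ) (y : ℝ) : ℝ := f I.2 y - f I.1 y

/-- `f(x, J) = f(x, d) - f(x, c)` for `J = (c, d)`. -/
def incr2 (f : ℝ → ℝ → ℝ) (x : ℝ) (J : ℝ × ℝ) : ℝ := f x J.2 - f x J.1

/-- The mixed difference `f(I, J)` for `I = (a, b)`, `J = (c, d)`. -/
def incr12 (f : ℝ → ℝ → ℝ) (I J : ℝ × ℝ) : ℝ :=
  f I.1 J.1 - f I.1 J.2 - f I.2 J.1 + f I.2 J.2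

/-- `ΛV₁(f)`: the partial `Λ`-variation of `f` in the first variable. -/
def Var1 (Λ : ℕ → ℝ) (f : ℝ → ℝ → ℝ) : ℝ≥0∞ :=
  ⨆ (y : ℝ) (n : ℕ) (I : {I : Fin n → ℝ × ℝ // Nonoverlapping I}),
    ∑ i : Fin n, ENNReal.ofReal (|incr1 f (I.1 i) y| / Λ (i.1 + 1))

/-- `ΛV₂(f)`: the partial `Λ`-variation of `f` in the second variable. -/
def Var2 (Λ : ℕ → ℝ) (f : ℝ → ℝ → ℝ) : ℝ≥0∞ :=
  ⨆ (x : ℝ) (m : ℕ) (J : {J : Fin m → ℝ × ℝ // Nonoverlapping J}),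
    ∑ j : Fin m, ENNReal.ofReal (|incr2 f x (J.1 j)| / Λ (j.1 + 1))

/-- `ΛV₁,₂(f)`: the mixed `Λ`-variation of `f`. -/
def Var12 (Λ : ℕ → ℝ) (f : ℝ → ℝ → ℝ) : ℝ≥0∞ :=
  ⨆ (n : ℕ) (m : ℕ) (I : {I : Fin n → ℝ × ℝ // Nonoverlapping I})
    (J : {J : Fin m → ℝ × ℝ // Nonoverlapping J}),
    ∑ i : Fin n, ∑ j : Fin m,
      ENNReal.ofReal (|incr12 f (I.1 i) (J.1 j)| / (Λ (i.1 + 1) * Λ (j.1 + 1)))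

/-- The harmonic sequence `λ_n = n` (giving harmonic variation `HV`). -/
def harmonicSeq : ℕ → ℝ := fun n => (n : ℝ)

/-- The constant sequence `λ_n = 1` (giving ordinary (Hardy) variation). -/
def oneSeq : ℕ → ℝ := fun _ => 1

/-- The partial modulus of variation `v₁(n, f)`. -/
def modulus1 (f : ℝ → ℝ → ℝ) (n : ℕ) : ℝ≥0∞ :=
  ⨆ (y : ℝ) (I : {I : Fin n → ℝ × ℝ // Nonoverlapping I}),
    ∑ i : Fin n, ENNReal.ofReal |incr1 f (I.1 i) y|

/-- The partial modulus of variation `v₂(m, f)`. -/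
def modulus2 (f : ℝ → ℝ → ℝ) (m : ℕ) : ℝ≥0∞ :=
  ⨆ (x : ℝ) (J : {J : Fin m → ℝ × ℝ // Nonoverlapping J}),
    ∑ j : Fin m, ENNReal.ofReal |incr2 f x (J.1 j)|

/-- The `Λ`-variation of a function of one variable on `[0, 2π]`. -/
def VarG (Λ : ℕ → ℝ) (g : ℝ → ℝ) : ℝ≥0∞ :=
  ⨆ (n : ℕ) (I : {I : Fin n → ℝ × ℝ // Nonoverlapping I}),
    ∑ i : Fin n, ENNReal.ofReal (|g (I.1 i).2 - g (I.1 i).1| / Λ (i.1 + 1))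

/-- The norm `‖f‖_C + ΛV₁(f) + ΛV₂(f)` (with values in `ℝ≥0∞`). -/
def PNorm (Λ : ℕ → ℝ) (f : ℝ → ℝ → ℝ) : ℝ≥0∞ :=
  (⨆ (x : ℝ) (y : ℝ), ENNReal.ofReal |f x y|) + Var1 Λ f + Var2 Λ f

/-- The Fourier coefficient `f̂(m, n)` of a (`2π`-periodic in each variable) function. -/
def fourierCoef (f : ℝ → ℝ → ℝ) (m n : ℤ) : ℂ :=
  (1 / (4 * (π : ℂ) ^ 2)) *
    ∫ x in (0:ℝ)..(2 * π), ∫ y in (0:ℝ)..(2 * π),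
      (f x y : ℂ) * Complex.exp (-Complex.I * m * x) * Complex.exp (-Complex.I * n * y)

/-- The rectangular partial sum `S_{M,N}[f](x, y)` of the double Fourier series of `f`. -/
def partialSum (f : ℝ → ℝ → ℝ) (M N : ℕ) (x y : ℝ) : ℂ :=
  ∑ m ∈ Finset.Icc (-(M : ℤ)) (M : ℤ), ∑ n ∈ Finset.Icc (-(N : ℤ)) (N : ℤ),
    fourierCoef f m n * Complex.exp (Complex.I * m * x) * Complex.exp (Complex.I * n * y)

/-- Pringsheim convergence of the rectangular partial sums at `(x, y)` to `L`. -/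
def PringsheimConv (f : ℝ → ℝ → ℝ) (x y L : ℝ) : Prop :=
  ∀ ε : ℝ, 0 < ε → ∃ N₀ : ℕ, ∀ M N : ℕ, N₀ ≤ M → N₀ ≤ N →
    ‖partialSum f M N x y - (L : ℂ)‖ < ε

/-- The four open-quadrant limits `f(x±0, y±0)` exist and equal `Lpp, Lpm, Lmp, Lmm`. -/
def QuadLimits (f : ℝ → ℝ → ℝ) (x y Lpp Lpm Lmp Lmm : ℝ) : Prop :=
  Tendsto (fun p : ℝ × ℝ => f p.1 p.2) ((𝓝[>] x) ×ˢ (𝓝[>] y)) (𝓝 Lpp) ∧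
  Tendsto (fun p : ℝ × ℝ => f p.1 p.2) ((𝓝[>] x) ×ˢ (𝓝[<] y)) (𝓝 Lpm) ∧
  Tendsto (fun p : ℝ × ℝ => f p.1 p.2) ((𝓝[<] x) ×ˢ (𝓝[>] y)) (𝓝 Lmp) ∧
  Tendsto (fun p : ℝ × ℝ => f p.1 p.2) ((𝓝[<] x) ×ˢ (𝓝[<] y)) (𝓝 Lmm)

/-!
With `λ_k = k γ_k`, the inequality `γ_j/γ_i + γ_i/γ_j ≥ 1` splits the harmonic weight as
`1/(i j) ≤ (γ_j/j)/λ_i + (γ_i/i)/λ_j`. Against the first term, a column sum `∑_i |f(I_i, J)|/λ_i`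
is at most `2 ΛV₁(f)` because `f(I, (c, d)) = f(I, d) - f(I, c)`; symmetrically, rows are bounded
by `2 ΛV₂(f)`. As the weights `γ_k/k` are summable, `HV₁,₂(f) ≤ 2 (∑ γ_k/k) (ΛV₁(f) + ΛV₂(f))`.
Since `γ` is nonincreasing, moreover `HVᵢ(f) ≤ γ₁ ΛVᵢ(f)`.
-/

lemma ENNReal.ofReal_abs_sub_div_le (a b c : ℝ) :
    ENNReal.ofReal (|a - b| / c) ≤ ENNReal.ofReal (|a| / c) + ENNReal.ofReal (|b| / c) := by
  rcases le_or_gt 0 c with hc | hc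
  · rw [← ENNReal.ofReal_add (by positivity) (by positivity), ← add_div]
    exact ENNReal.ofReal_le_ofReal (div_le_div_of_nonneg_right (abs_sub _ _) hc)
  · rw [ENNReal.ofReal_of_nonpos (div_nonpos_of_nonneg_of_nonpos (abs_nonneg _) hc.le)]
    exact zero_le

lemma div_mul_le_add {x p q a b : ℝ} (hx : 0 ≤ x) (hp : 0 < p) (hq : 0 < q) (ha : 0 < a)
    (hb : 0 < b) : x / (p * q) ≤ b / q * (x / (p * a)) + a / p * (x / (q * b)) := by
  have key : b / q * (x / (p * a)) + a / p * (x / (q * b))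
      = x / (p * q) * ((a - b) ^ 2 + a * b) / (a * b) + x / (p * q) := by
    field_simp
    ring
  rw [key, le_add_iff_nonneg_left]
  positivity

lemma incr12_eq_incr1_sub (f : ℝ → ℝ → ℝ) (I J : ℝ × ℝ) :
    incr12 f I J = incr1 f I J.2 - incr1 f I J.1 := by
  simp only [incr12, incr1]
  ring

lemma incr12_flip (f : ℝ → ℝ → ℝ) (I J : ℝ × ℝ) : incr12 (flip f) J I = incr12 f I J := by
  simp only [incr12, flip]
  ring

lemma Var2_eq_Var1_flip (Λ : ℕ → ℝ) (f : ℝ → ℝ → ℝ) : Var2 Λ f = Var1 Λ (flip f) := rfl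

lemma sum_le_Var1 (Λ : ℕ → ℝ) (f : ℝ → ℝ → ℝ) (y : ℝ) {n : ℕ} (I : Fin n → ℝ × ℝ)
    (hI : Nonoverlapping I) :
    ∑ i : Fin n, ENNReal.ofReal (|incr1 f (I i) y| / Λ (i.1 + 1)) ≤ Var1 Λ f :=
  le_iSup_of_le y <| le_iSup_of_le n <| le_iSup_of_le ⟨I, hI⟩ le_rfl

lemma sum_incr12_le_two_mul_Var1 (Λ : ℕ → ℝ) (f : ℝ → ℝ → ℝ) {n : ℕ} (I : Fin n → ℝ × ℝ)
    (hI : Nonoverlapping I) (J : ℝ × ℝ) :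
    ∑ i : Fin n, ENNReal.ofReal (|incr12 f (I i) J| / Λ (i.1 + 1)) ≤ 2 * Var1 Λ f :=
  calc ∑ i : Fin n, ENNReal.ofReal (|incr12 f (I i) J| / Λ (i.1 + 1))
      ≤ ∑ i : Fin n, (ENNReal.ofReal (|incr1 f (I i) J.2| / Λ (i.1 + 1))
          + ENNReal.ofReal (|incr1 f (I i) J.1| / Λ (i.1 + 1))) := by
        gcongr with i
        rw [incr12_eq_incr1_sub]
        exact ENNReal.ofReal_abs_sub_div_le _ _ _
    _ ≤ Var1 Λ f + Var1 Λ f := by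
        rw [Finset.sum_add_distrib]
        exact add_le_add (sum_le_Var1 Λ f _ I hI) (sum_le_Var1 Λ f _ I hI)
    _ = 2 * Var1 Λ f := (two_mul _).symm

lemma sum_incr12_le_two_mul_Var2 (Λ : ℕ → ℝ) (f : ℝ → ℝ → ℝ) {m : ℕ} (J : Fin m → ℝ × ℝ)
    (hJ : Nonoverlapping J) (I : ℝ × ℝ) :
    ∑ j : Fin m, ENNReal.ofReal (|incr12 f I (J j)| / Λ (j.1 + 1)) ≤ 2 * Var2 Λ f := by
  simpa only [incr12_flip, Var2_eq_Var1_flip] using sum_incr12_le_two_mul_Var1 Λ (flip f) J hJ I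

lemma Var1_le_mul_Var1 {Λ Λ' : ℕ → ℝ} {c : ℝ} (hΛ : ∀ k, 0 < Λ (k + 1))
    (hΛ' : ∀ k, 0 < Λ' (k + 1)) (hle : ∀ k, Λ (k + 1) ≤ c * Λ' (k + 1)) (f : ℝ → ℝ → ℝ) :
    Var1 Λ' f ≤ ENNReal.ofReal c * Var1 Λ f := by
  refine iSup_le fun y => iSup_le fun n => iSup_le fun I => ?_
  calc ∑ i : Fin n, ENNReal.ofReal (|incr1 f (I.1 i) y| / Λ' (i.1 + 1))
      ≤ ∑ i : Fin n, ENNReal.ofReal c * ENNReal.ofReal (|incr1 f (I.1 i) y| / Λ (i.1 + 1)) := by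
        gcongr with i
        have hc : 0 ≤ c := (pos_of_mul_pos_left ((hΛ i).trans_le (hle i)) (hΛ' i).le).le
        rw [← ENNReal.ofReal_mul hc, mul_div_assoc']
        refine ENNReal.ofReal_le_ofReal ?_
        rw [div_le_div_iff₀ (hΛ' i) (hΛ i)]
        nlinarith [abs_nonneg (incr1 f (I.1 i) y), hle i]
    _ ≤ ENNReal.ofReal c * Var1 Λ f := by
        rw [← Finset.mul_sum]
        exact mul_le_mul_right (sum_le_Var1 Λ f y I.1 I.2) _

lemma Var2_le_mul_Var2 {Λ Λ' : ℕ → ℝ} {c : ℝ} (hΛ : ∀ k, 0 < Λ (k + 1))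
    (hΛ' : ∀ k, 0 < Λ' (k + 1)) (hle : ∀ k, Λ (k + 1) ≤ c * Λ' (k + 1)) (f : ℝ → ℝ → ℝ) :
    Var2 Λ' f ≤ ENNReal.ofReal c * Var2 Λ f :=
  Var1_le_mul_Var1 hΛ hΛ' hle (flip f)

lemma sum_fin_le_tsum (g : ℕ → ℝ≥0∞) (n : ℕ) : ∑ i : Fin n, g i ≤ ∑' k, g k := by
  rw [Fin.sum_univ_eq_sum_range g n]
  exact ENNReal.sum_le_tsum _

theorem Var12_harmonicSeq_le (γ : ℕ → ℝ) (hγ : ∀ k, 0 < γ (k + 1)) (f : ℝ → ℝ → ℝ) :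
    Var12 harmonicSeq f ≤ 2 * (∑' k : ℕ, ENNReal.ofReal (γ (k + 1) / ((k : ℝ) + 1))) *
      (Var1 (fun n => (n : ℝ) * γ n) f + Var2 (fun n => (n : ℝ) * γ n) f) := by
  set Λ : ℕ → ℝ := fun n => (n : ℝ) * γ n
  set w : ℕ → ℝ≥0∞ := fun k => ENNReal.ofReal (γ (k + 1) / ((k : ℝ) + 1))
  refine iSup_le fun n => iSup_le fun m => iSup_le fun I => iSup_le fun J => ?_
  set d : Fin n → Fin m → ℝ := fun i j => |incr12 f (I.1 i) (J.1 j)|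
  have weight_split : ∀ i j,
      ENNReal.ofReal (d i j / (harmonicSeq (i.1 + 1) * harmonicSeq (j.1 + 1)))
        ≤ w j * ENNReal.ofReal (d i j / Λ (i.1 + 1))
          + w i * ENNReal.ofReal (d i j / Λ (j.1 + 1)) := by
    intro i j
    have hi := hγ i
    have hj := hγ j
    have hd : 0 ≤ d i j := abs_nonneg _
    simp only [w, Λ, harmonicSeq, Nat.cast_add, Nat.cast_one]
    rw [← ENNReal.ofReal_mul (by positivity), ← ENNReal.ofReal_mul (by positivity),
      ← ENNReal.ofReal_add (by positivity) (by positivity)]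
    exact ENNReal.ofReal_le_ofReal (div_mul_le_add hd (by positivity) (by positivity) hi hj)
  calc ∑ i : Fin n, ∑ j : Fin m,
        ENNReal.ofReal (d i j / (harmonicSeq (i.1 + 1) * harmonicSeq (j.1 + 1)))
      ≤ ∑ i : Fin n, ∑ j : Fin m, (w j * ENNReal.ofReal (d i j / Λ (i.1 + 1))
          + w i * ENNReal.ofReal (d i j / Λ (j.1 + 1))) := by
        gcongr with i _ j _
        exact weight_split i j
    _ = ∑ j : Fin m, w j * ∑ i : Fin n, ENNReal.ofReal (d i j / Λ (i.1 + 1))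
          + ∑ i : Fin n, w i * ∑ j : Fin m, ENNReal.ofReal (d i j / Λ (j.1 + 1)) := by
        simp only [Finset.sum_add_distrib, Finset.mul_sum]
        rw [Finset.sum_comm]
    _ ≤ ∑ j : Fin m, w j * (2 * Var1 Λ f) + ∑ i : Fin n, w i * (2 * Var2 Λ f) := by
        gcongr with j _ i _
        · exact sum_incr12_le_two_mul_Var1 Λ f I.1 I.2 (J.1 j)
        · exact sum_incr12_le_two_mul_Var2 Λ f J.1 J.2 (I.1 i)
    _ ≤ (∑' k, w k) * (2 * Var1 Λ f) + (∑' k, w k) * (2 * Var2 Λ f) := by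
        rw [← Finset.sum_mul, ← Finset.sum_mul]
        gcongr <;> exact sum_fin_le_tsum w _
    _ = 2 * (∑' k, w k) * (Var1 Λ f + Var2 Λ f) := by ring

/-- if `λ_n = n·γ_n` with `γ` nonincreasing positive and `∑ γ_n/n < ∞`,
then `PΛBV ⊆ HBV`; more precisely `HV₁,₂(f) ≤ C(ΛV₁(f) + ΛV₂(f))` with `C` depending
only on `Λ`, and finiteness of `ΛV₁(f) + ΛV₂(f)` implies finiteness of the full
harmonic variation. -/
theorem statement0 (γ : ℕ → ℝ) (hγpos : ∀ n, 0 < γ n)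
    (hγmono : ∀ n, γ (n + 1) ≤ γ n)
    (hsum : Summable (fun n : ℕ => γ (n + 1) / ((n : ℝ) + 1))) :
    ∃ C : ℝ≥0, ∀ f : ℝ → ℝ → ℝ, Periodic2 f →
      (Var12 harmonicSeq f ≤
        (C : ℝ≥0∞) * (Var1 (fun n => (n : ℝ) * γ n) f + Var2 (fun n => (n : ℝ) * γ n) f)) ∧
      (Var1 (fun n => (n : ℝ) * γ n) f + Var2 (fun n => (n : ℝ) * γ n) f < ⊤ →
        Var1 harmonicSeq f + Var2 harmonicSeq f + Var12 harmonicSeq f < ⊤) := by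
  set S := ∑' k : ℕ, ENNReal.ofReal (γ (k + 1) / ((k : ℝ) + 1)) with hS_def
  have hS : S ≠ ⊤ := by
    have hnonneg : ∀ k : ℕ, 0 ≤ γ (k + 1) / ((k : ℝ) + 1) := fun k => by
      have := hγpos (k + 1); positivity
    rw [hS_def, ← ENNReal.ofReal_tsum_of_nonneg hnonneg hsum]
    exact ENNReal.ofReal_ne_top
  have hmixed : ∀ f, Var12 harmonicSeq f ≤ ((2 * S.toNNReal : ℝ≥0) : ℝ≥0∞) *
      (Var1 (fun n => (n : ℝ) * γ n) f + Var2 (fun n => (n : ℝ) * γ n) f) := by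
    intro f
    rw [ENNReal.coe_mul, ENNReal.coe_toNNReal hS]
    exact Var12_harmonicSeq_le γ (fun k => hγpos _) f
  refine ⟨2 * S.toNNReal, fun f _ => ⟨hmixed f, fun hfin => ?_⟩⟩
  have hΛ : ∀ k : ℕ, 0 < ((k + 1 : ℕ) : ℝ) * γ (k + 1) := fun k => by
    have := hγpos (k + 1); positivity
  have hH : ∀ k : ℕ, 0 < harmonicSeq (k + 1) := fun k => by
    simp only [harmonicSeq]; positivity
  have hle : ∀ k : ℕ, ((k + 1 : ℕ) : ℝ) * γ (k + 1) ≤ γ 1 * harmonicSeq (k + 1) := fun k => by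
    rw [harmonicSeq, mul_comm]
    exact mul_le_mul_of_nonneg_right (antitone_nat_of_succ_le hγmono (Nat.le_add_left 1 k))
      (Nat.cast_nonneg _)
  obtain ⟨h1, h2⟩ := ENNReal.add_lt_top.1 hfin
  refine ENNReal.add_lt_top.2 ⟨ENNReal.add_lt_top.2 ⟨?_, ?_⟩, ?_⟩
  · exact (Var1_le_mul_Var1 hΛ hH hle f).trans_lt (ENNReal.mul_lt_top ENNReal.ofReal_lt_top h1)
  · exact (Var2_le_mul_Var2 hΛ hH hle f).trans_lt (ENNReal.mul_lt_top ENNReal.ofReal_lt_top h2)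
  · exact (hmixed f).trans_lt (ENNReal.mul_lt_top ENNReal.coe_lt_top hfin)
end
end

section
/- PHBV ⊄ HBV: there exists a function f on ℝ², 2π-periodic in each variable, with bounded partial harmonic variation, HV_1(f) + HV_2(f) < ∞, but with infinite mixed harmonic variation, HV_{1,2}(f) = ∞. -/
open Real Filter Topology MeasureTheory
open scoped ENNReal NNReal BigOperators

noncomputable section

/-!
Choose disjoint finite sets `X_k ⊂ (0, π/2]`, `k ≥ 1`, with `2 ^ k` points each, all of the form
`π / 2 ^ m` with `m` odd, and let `f = 1/k` on `X_k × X_k` (extended `2π`-periodically) and `0`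
elsewhere. A row `f(·, y)` is `1/k` times the indicator of `X_k`, so at most `2 ^ (k + 1)` of the
increments in a harmonic sum are nonzero, each at most `1/k`; the sum is at most
`H(2 ^ (k + 1)) / k ≤ 3`. The rectangles `[π / 2 ^ (m + 1), π / 2 ^ m]²` with `π / 2 ^ m ∈ X_k`
all have mixed difference `1/k`, so the mixed harmonic sum over them is `H(2 ^ k)² / k ≥ k / 4`.
-/

namespace PHBVNotHBV

open Finset

theorem _root_.Antitone.sum_le_sum_range_card {M : Type*} [AddCommMonoid M] [PartialOrder M]
    [IsOrderedAddMonoid M] {f : ℕ → M} (hf : Antitone f) (s : Finset ℕ) :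
    ∑ i ∈ s, f i ≤ ∑ i ∈ range #s, f i := by
  induction s using Finset.induction_on_max with
  | empty => simp
  | insert a s hlt ih =>
    have has : a ∉ s := fun h => lt_irrefl a (hlt a h)
    have hcard : #s ≤ a := by
      simpa using card_le_card (fun x hx => mem_range.2 (hlt x hx) : s ⊆ range a)
    rw [sum_insert has, card_insert_of_notMem has, sum_range_succ, add_comm]
    exact add_le_add ih (hf hcard)

theorem harmonic_monotone : Monotone harmonic :=
  monotone_nat_of_le_succ fun n => by
    rw [harmonic_succ]
    exact le_add_of_nonneg_right (by positivity)

theorem sum_inv_harmonicSeq (n : ℕ) :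
    ∑ i : Fin n, (harmonicSeq (i.1 + 1))⁻¹ = harmonic n := by
  simp [harmonicSeq, harmonic, Fin.sum_univ_eq_sum_range (fun i => ((i : ℝ) + 1)⁻¹)]

theorem sum_div_harmonicSeq_le {n M : ℕ} {a : Fin n → ℝ} {c : ℝ} (hc : 0 ≤ c)
    (hac : ∀ i, a i ≤ c) (hM : #{i | a i ≠ 0} ≤ M) :
    ∑ i, a i / harmonicSeq (i.1 + 1) ≤ c * harmonic M := by
  set T : Finset (Fin n) := {i | a i ≠ 0}
  have hinv_anti : Antitone fun j : ℕ => ((j : ℝ) + 1)⁻¹ := fun i j hij => by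
    dsimp only; gcongr
  calc ∑ i, a i / harmonicSeq (i.1 + 1) = ∑ i ∈ T, a i / harmonicSeq (i.1 + 1) :=
        (sum_filter_of_ne fun i _ h => left_ne_zero_of_mul h).symm
    _ ≤ ∑ i ∈ T, c * ((i.1 : ℝ) + 1)⁻¹ := sum_le_sum fun i _ => by
        rw [harmonicSeq, div_eq_mul_inv]; push_cast; gcongr; exact hac i
    _ = c * ∑ j ∈ T.map Fin.valEmbedding, ((j : ℝ) + 1)⁻¹ := by rw [mul_sum, sum_map]; rfl
    _ ≤ c * ∑ j ∈ range M, ((j : ℝ) + 1)⁻¹ := by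
        refine mul_le_mul_of_nonneg_left ((hinv_anti.sum_le_sum_range_card _).trans
          (sum_le_sum_of_subset_of_nonneg ?_ fun _ _ _ => by positivity)) hc
        rw [card_map]
        exact range_subset_range.2 hM
    _ = c * harmonic M := by simp [harmonic]

theorem inv_mul_harmonic_two_pow_succ_le (k : ℕ) :
    (k : ℝ)⁻¹ * harmonic (2 ^ (k + 1)) ≤ 3 := by
  rcases Nat.eq_zero_or_pos k with rfl | hk
  · simp
  have hk' : (1 : ℝ) ≤ k := by exact_mod_cast hk
  have hlog : Real.log ((2 ^ (k + 1) : ℕ) : ℝ) ≤ k + 1 := by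
    rw [Nat.cast_pow, Real.log_pow]
    push_cast
    nlinarith [Real.log_two_lt_d9]
  rw [inv_mul_le_iff₀ (by positivity)]
  linarith [harmonic_le_one_add_log (2 ^ (k + 1))]

theorem div_four_le_inv_mul_harmonic_two_pow_sq (k : ℕ) :
    (k : ℝ) / 4 ≤ (k : ℝ)⁻¹ * harmonic (2 ^ k) ^ 2 := by
  rcases Nat.eq_zero_or_pos k with rfl | hk
  · simp
  have hk' : (0 : ℝ) < k := by exact_mod_cast hk
  have hH : (k : ℝ) / 2 ≤ harmonic (2 ^ k) := by
    calc (k : ℝ) / 2 ≤ k * Real.log 2 := by nlinarith [Real.log_two_gt_d9]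
      _ = Real.log ((2 ^ k : ℕ) : ℝ) := by rw [Nat.cast_pow, Real.log_pow]; norm_num
      _ ≤ Real.log ((2 ^ k + 1 : ℕ) : ℝ) :=
          Real.log_le_log (by positivity) (by exact_mod_cast Nat.le_succ _)
      _ ≤ harmonic (2 ^ k) := log_add_one_le_harmonic _
  rw [le_inv_mul_iff₀ hk']
  nlinarith

theorem _root_.Nonoverlapping.injective_fst {n : ℕ} {I : Fin n → ℝ × ℝ}
    (hI : Nonoverlapping I) : Function.Injective fun i => (I i).1 :=
  fun i j (h : (I i).1 = (I j).1) => by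
    by_contra hne
    rcases hI.2 i j hne with h' | h' <;> linarith [(hI.1 i).2.1, (hI.1 j).2.1]

theorem _root_.Nonoverlapping.injective_snd {n : ℕ} {I : Fin n → ℝ × ℝ}
    (hI : Nonoverlapping I) : Function.Injective fun i => (I i).2 :=
  fun i j (h : (I i).2 = (I j).2) => by
    by_contra hne
    rcases hI.2 i j hne with h' | h' <;> linarith [(hI.1 i).2.1, (hI.1 j).2.1]

theorem _root_.Nonoverlapping.card_endpoint_mem_le {n : ℕ} {I : Fin n → ℝ × ℝ}
    (hI : Nonoverlapping I) (P : Finset ℝ) :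
    #{i | (I i).1 ∈ P ∨ (I i).2 ∈ P} ≤ 2 * #P := by
  rw [filter_or, two_mul]
  refine (card_union_le _ _).trans (add_le_add ?_ ?_)
  · exact card_le_card_of_injOn _ (fun i hi => (mem_filter.1 hi).2) hI.injective_fst.injOn
  · exact card_le_card_of_injOn _ (fun i hi => (mem_filter.1 hi).2) hI.injective_snd.injOn

theorem sum_abs_sub_div_harmonicSeq_le {g : ℝ → ℝ} {c : ℝ} {P : Finset ℝ}
    (hg0 : ∀ x, 0 ≤ g x) (hgc : ∀ x, g x ≤ c)
    (hP : ∀ x ∈ Set.Icc 0 (2 * π), g x ≠ 0 → x ∈ P) {n : ℕ} {I : Fin n → ℝ × ℝ}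
    (hI : Nonoverlapping I) :
    ∑ i, |g (I i).2 - g (I i).1| / harmonicSeq (i.1 + 1) ≤ c * harmonic (2 * #P) := by
  refine sum_div_harmonicSeq_le ((hg0 0).trans (hgc 0))
    (fun i => abs_sub_le_iff.2 ⟨by linarith [hg0 (I i).1, hgc (I i).2],
      by linarith [hg0 (I i).2, hgc (I i).1]⟩)
    ((card_le_card ?_).trans (hI.card_endpoint_mem_le P))
  intro i hi
  obtain ⟨ha0, hab, hb2⟩ := hI.1 i
  simp only [mem_filter, mem_univ, true_and, ne_eq, abs_eq_zero, sub_eq_zero] at hi ⊢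
  by_cases ha : g (I i).1 = 0
  · exact Or.inr (hP _ ⟨by linarith, hb2⟩ (by rwa [ha] at hi))
  · exact Or.inl (hP _ ⟨ha0, by linarith⟩ ha)

theorem Var1_le_ofReal {Λ : ℕ → ℝ} {f : ℝ → ℝ → ℝ} {C : ℝ} (hΛ : ∀ k, 0 ≤ Λ k)
    (h : ∀ y n (I : Fin n → ℝ × ℝ), Nonoverlapping I →
      ∑ i : Fin n, |incr1 f (I i) y| / Λ (i.1 + 1) ≤ C) :
    Var1 Λ f ≤ ENNReal.ofReal C :=
  iSup₂_le fun y n => iSup_le fun I => by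
    rw [← ENNReal.ofReal_sum_of_nonneg fun i _ => div_nonneg (abs_nonneg _) (hΛ _)]
    exact ENNReal.ofReal_le_ofReal (h y n I.1 I.2)

theorem Var2_eq_Var1_of_comm {Λ : ℕ → ℝ} {f : ℝ → ℝ → ℝ} (hf : ∀ x y, f x y = f y x) :
    Var2 Λ f = Var1 Λ f := by
  simp only [Var1, Var2, incr1, incr2, hf]

theorem sum_le_Var12 {Λ : ℕ → ℝ} {f : ℝ → ℝ → ℝ} {n m : ℕ} {I : Fin n → ℝ × ℝ}
    {J : Fin m → ℝ × ℝ} (hI : Nonoverlapping I) (hJ : Nonoverlapping J) :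
    ∑ i, ∑ j, ENNReal.ofReal (|incr12 f (I i) (J j)| / (Λ (i.1 + 1) * Λ (j.1 + 1))) ≤
      Var12 Λ f :=
  le_iSup₂_of_le n m <| le_iSup₂_of_le (⟨I, hI⟩ : {I // Nonoverlapping I})
    (⟨J, hJ⟩ : {J // Nonoverlapping J}) le_rfl

theorem strictAnti_pi_div_two_pow : StrictAnti fun m : ℕ => π / 2 ^ m := fun m m' h => by
  dsimp only
  gcongr
  norm_num

theorem pi_div_two_pow_mem_Ioo (m : ℕ) : π / 2 ^ m ∈ Set.Ioo 0 (2 * π) := by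
  refine ⟨by positivity, ?_⟩
  calc π / 2 ^ m ≤ π / 2 ^ 0 := strictAnti_pi_div_two_pow.antitone (Nat.zero_le _)
    _ < 2 * π := by linarith [pi_pos]

def dyadicInterval (m : ℕ) : ℝ × ℝ := (π / 2 ^ (m + 1), π / 2 ^ m)

theorem nonoverlapping_dyadicInterval {n : ℕ} {u : Fin n → ℕ} (hu : Function.Injective u) :
    Nonoverlapping (dyadicInterval ∘ u) := by
  refine ⟨fun i => ⟨(pi_div_two_pow_mem_Ioo _).1.le,
    strictAnti_pi_div_two_pow (Nat.lt_succ_self _), (pi_div_two_pow_mem_Ioo _).2.le⟩,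
    fun i j hij => ?_⟩
  rcases lt_or_gt_of_ne (hu.ne hij) with h | h
  · exact Or.inr (strictAnti_pi_div_two_pow.antitone h)
  · exact Or.inl (strictAnti_pi_div_two_pow.antitone h)

/-- Odd, so that the left endpoints `π / 2 ^ (gridExp k i + 1)` of the dyadic intervals ending at
grid points are never grid points themselves. -/
def gridExp (k i : ℕ) : ℕ := 2 * Nat.pair k i + 1

theorem gridExp_injective : Function.Injective fun p : ℕ × ℕ => gridExp p.1 p.2 :=
  fun p q h => by
    have : Nat.pair p.1 p.2 = Nat.pair q.1 q.2 := by simp only [gridExp] at h; omega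
    exact Prod.ext (Nat.pair_eq_pair.1 this).1 (Nat.pair_eq_pair.1 this).2

def gridPt (k i : ℕ) : ℝ := π / 2 ^ gridExp k i

/-- `level x = k` if `x ≡ gridPt k i (mod 2π)` for some `i < 2 ^ k`, and `level x = 0` otherwise;
so `X_k` is the set of points of level `k ≥ 1`. -/
def level (x : ℝ) : ℕ :=
  Function.extend (fun p : ℕ × ℕ => gridPt p.1 p.2) (fun p => if p.2 < 2 ^ p.1 then p.1 else 0) 0
    (toIcoMod two_pi_pos 0 x)

theorem level_add_two_pi (x : ℝ) : level (x + 2 * π) = level x := by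
  simp only [level, toIcoMod_add_right]

theorem level_gridPt (k i : ℕ) : level (gridPt k i) = if i < 2 ^ k then k else 0 := by
  have hinj : Function.Injective fun p : ℕ × ℕ => gridPt p.1 p.2 :=
    strictAnti_pi_div_two_pow.injective.comp gridExp_injective
  rw [level, (toIcoMod_eq_self _).2
      (by simpa [gridPt] using Set.Ioo_subset_Ico_self (pi_div_two_pow_mem_Ioo (gridExp k i))),
    hinj.extend_apply _ _ (k, i)]

theorem level_eq_zero {x : ℝ} (hx : x ∈ Set.Ico 0 (2 * π)) (h : ∀ k i, gridPt k i ≠ x) :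
    level x = 0 := by
  rw [level, (toIcoMod_eq_self _).2 (by simpa using hx),
    Function.extend_apply' _ _ _ fun ⟨p, hp⟩ => h p.1 p.2 hp]
  rfl

theorem level_dyadicInterval_fst (k i : ℕ) : level (dyadicInterval (gridExp k i)).1 = 0 := by
  refine level_eq_zero (Set.Ioo_subset_Ico_self (pi_div_two_pow_mem_Ioo _)) fun k' i' h => ?_
  have := strictAnti_pi_div_two_pow.injective h
  simp only [gridExp] at this
  omega

theorem mem_image_gridPt_of_level_ne_zero {x : ℝ} (hx : x ∈ Set.Icc 0 (2 * π))
    (h : level x ≠ 0) : x ∈ (range (2 ^ level x)).image (gridPt (level x)) := by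
  have hx' : x ∈ Set.Ico 0 (2 * π) := by
    refine ⟨hx.1, lt_of_le_of_ne hx.2 fun hx2 => h ?_⟩
    rw [hx2, ← zero_add (2 * π), level_add_two_pi]
    exact level_eq_zero ⟨le_rfl, two_pi_pos⟩ fun k i => (pi_div_two_pow_mem_Ioo _).1.ne'
  by_cases hrange : ∃ k i, gridPt k i = x
  · obtain ⟨k, i, rfl⟩ := hrange
    rw [level_gridPt] at h ⊢
    split_ifs at h ⊢ with hi
    · exact mem_image_of_mem _ (mem_range.2 hi)
    · exact absurd rfl h
  · push Not at hrange
    exact absurd (level_eq_zero hx' hrange) h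

/-- Since `(0 : ℝ)⁻¹ = 0`, this vanishes unless both points lie in the same `X_k` with `k ≥ 1`. -/
def levelFn (x y : ℝ) : ℝ := if level x = level y then (level x : ℝ)⁻¹ else 0

theorem levelFn_comm (x y : ℝ) : levelFn x y = levelFn y x := by
  unfold levelFn
  split_ifs with h h' h' <;> simp_all

theorem periodic2_levelFn : Periodic2 levelFn := fun x y => by
  simp only [levelFn, level_add_two_pi, and_self]

theorem levelFn_of_level_eq_zero {x : ℝ} (hx : level x = 0) (y : ℝ) : levelFn x y = 0 := by
  simp [levelFn, hx]

theorem sum_incr1_levelFn_le (y : ℝ) {n : ℕ} {I : Fin n → ℝ × ℝ} (hI : Nonoverlapping I) :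
    ∑ i, |incr1 levelFn (I i) y| / harmonicSeq (i.1 + 1) ≤ 3 := by
  set k := level y
  set P := (range (2 ^ k)).image (gridPt k)
  have hnonneg : ∀ x, 0 ≤ levelFn x y := fun x => by
    unfold levelFn; split_ifs <;> positivity
  have hle : ∀ x, levelFn x y ≤ (k : ℝ)⁻¹ := fun x => by
    unfold levelFn; split_ifs with h
    · rw [h]
    · positivity
  have hsupp : ∀ x ∈ Set.Icc 0 (2 * π), levelFn x y ≠ 0 → x ∈ P := fun x hx hne => by
    simp only [levelFn] at hne
    split_ifs at hne with h
    · have hx0 : level x ≠ 0 := fun h0 => hne (by simp [h0])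
      simpa only [h] using mem_image_gridPt_of_level_ne_zero hx hx0
    · exact absurd rfl hne
  have hcard : 2 * #P ≤ 2 ^ (k + 1) := by
    rw [pow_succ, mul_comm]
    exact Nat.mul_le_mul_right 2 (card_image_le.trans (card_range _).le)
  calc ∑ i, |incr1 levelFn (I i) y| / harmonicSeq (i.1 + 1)
      ≤ (k : ℝ)⁻¹ * harmonic (2 * #P) := sum_abs_sub_div_harmonicSeq_le hnonneg hle hsupp hI
    _ ≤ (k : ℝ)⁻¹ * harmonic (2 ^ (k + 1)) := by
      gcongr
      exact_mod_cast harmonic_monotone hcard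
    _ ≤ 3 := inv_mul_harmonic_two_pow_succ_le k

theorem Var1_levelFn_lt_top : Var1 harmonicSeq levelFn < ⊤ :=
  (Var1_le_ofReal (fun k => (Nat.cast_nonneg k : (0 : ℝ) ≤ k))
    fun y _ _ hI => sum_incr1_levelFn_le y hI).trans_lt ENNReal.ofReal_lt_top

theorem incr12_levelFn_dyadicInterval {k i j : ℕ} (hi : i < 2 ^ k) (hj : j < 2 ^ k) :
    incr12 levelFn (dyadicInterval (gridExp k i)) (dyadicInterval (gridExp k j)) =
      (k : ℝ)⁻¹ := by
  have ha := level_dyadicInterval_fst k i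
  have hc := level_dyadicInterval_fst k j
  have hb : (dyadicInterval (gridExp k i)).2 = gridPt k i := rfl
  have hd : (dyadicInterval (gridExp k j)).2 = gridPt k j := rfl
  rw [incr12, levelFn_of_level_eq_zero ha, levelFn_of_level_eq_zero ha, levelFn_comm,
    levelFn_of_level_eq_zero hc, hb, hd]
  simp [levelFn, level_gridPt, hi, hj]

theorem ofReal_le_Var12_levelFn (k : ℕ) :
    ENNReal.ofReal ((k : ℝ)⁻¹ * harmonic (2 ^ k) ^ 2) ≤ Var12 harmonicSeq levelFn := by
  set u : Fin (2 ^ k) → ℕ := fun i => gridExp k i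
  have hu : Function.Injective u := fun i j h => Fin.ext (Nat.pair_eq_pair.1
    (by simp only [u, gridExp] at h; omega : Nat.pair k i = Nat.pair k j)).2
  refine le_trans (le_of_eq ?_) (sum_le_Var12 (nonoverlapping_dyadicInterval hu)
    (nonoverlapping_dyadicInterval hu))
  have hnn : ∀ i j : Fin (2 ^ k),
      0 ≤ (k : ℝ)⁻¹ * (harmonicSeq (i.1 + 1))⁻¹ * (harmonicSeq (j.1 + 1))⁻¹ := fun i j => by
    unfold harmonicSeq; positivity
  have hterm : ∀ i j : Fin (2 ^ k),
      |incr12 levelFn ((dyadicInterval ∘ u) i) ((dyadicInterval ∘ u) j)| /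
          (harmonicSeq (i.1 + 1) * harmonicSeq (j.1 + 1)) =
        (k : ℝ)⁻¹ * (harmonicSeq (i.1 + 1))⁻¹ * (harmonicSeq (j.1 + 1))⁻¹ := fun i j => by
    rw [Function.comp_apply, Function.comp_apply, incr12_levelFn_dyadicInterval i.2 j.2,
      abs_of_nonneg (by positivity), div_eq_mul_inv, mul_inv, mul_assoc]
  have hsum : (k : ℝ)⁻¹ * harmonic (2 ^ k) ^ 2 = ∑ i : Fin (2 ^ k), ∑ j : Fin (2 ^ k),
      (k : ℝ)⁻¹ * (harmonicSeq (i.1 + 1))⁻¹ * (harmonicSeq (j.1 + 1))⁻¹ := by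
    rw [← sum_inv_harmonicSeq, sq, sum_mul_sum, mul_sum]
    simp only [mul_sum, mul_assoc]
  simp_rw [hterm]
  rw [hsum, ENNReal.ofReal_sum_of_nonneg fun i _ => sum_nonneg fun j _ => hnn i j]
  exact sum_congr rfl fun i _ => ENNReal.ofReal_sum_of_nonneg fun j _ => hnn i j

theorem Var12_levelFn : Var12 harmonicSeq levelFn = ⊤ := by
  refine eq_top_iff.2 (ENNReal.iSup_natCast ▸ iSup_le fun m => ?_)
  refine le_trans ?_ (ofReal_le_Var12_levelFn (4 * m))
  rw [← ENNReal.ofReal_natCast]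
  refine ENNReal.ofReal_le_ofReal
    (le_trans (le_of_eq ?_) (div_four_le_inv_mul_harmonic_two_pow_sq _))
  push_cast
  ring

end PHBVNotHBV

/-- `PHBV ⊄ HBV`: there is a `2π`-periodic (in each variable) function
with bounded partial harmonic variation but infinite mixed harmonic variation. -/
theorem statement3 :
    ∃ f : ℝ → ℝ → ℝ, Periodic2 f ∧
      Var1 harmonicSeq f + Var2 harmonicSeq f < ⊤ ∧
      Var12 harmonicSeq f = ⊤ := by
  refine ⟨PHBVNotHBV.levelFn, PHBVNotHBV.periodic2_levelFn, ?_, PHBVNotHBV.Var12_levelFn⟩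
  rw [PHBVNotHBV.Var2_eq_Var1_of_comm PHBVNotHBV.levelFn_comm]
  exact ENNReal.add_lt_top.2 ⟨PHBVNotHBV.Var1_levelFn_lt_top, PHBVNotHBV.Var1_levelFn_lt_top⟩
end
end

section
/- Let g be a real function on [0,2π] and 0 = t_1 < t_2 < … < t_{2m} = 2π be such that g is increasing on [t_i,t_{i+1}] for odd i and decreasing on [t_i,t_{i+1}] for even i, and suppose the successive oscillations strictly decrease: |g(t_{i+1})−g(t_i)| > |g(t_{i+2})−g(t_{i+1})| for i = 1,…,2m−2. Then for any nondecreasing sequence Λ = {λ_n} of positive numbers with λ_n → ∞, the Λ-variation of g equals ∑_{i=1}^{2m−1} |g(t_{i+1})−g(t_i)|/λ_i. -/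
/-!
Since every value `g (t (p + 2))` lies between `g (t p)` and `g (t (p + 1))`, `g` maps all of
`[t p, 2π]` into the interval between `g (t p)` and `g (t (p + 1))`. Hence an increment over an
interval starting in the `p`-th piece is at most the `p`-th oscillation `d_p`, and the `d_p`
decrease. Removing the rightmost interval, induction on their number shows that any `k`
nonoverlapping intervals have total increment at most `d_0 + ⋯ + d_(k-1)`: when the removed
interval starts in the `r`-th piece with `r < k`, the others together with the rest of that piece
are bounded by the total variation up to `t (r + 1)`, and the overshoot costs at most `d_(r+1)`.
Summation by parts against the decreasing weights `1 / λ_i` turns these partial-sum bounds into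
`ΛV(g) ≤ ∑ d_i / λ_i`, and the partition itself attains the sum.
-/

open Real Filter Topology MeasureTheory
open scoped ENNReal NNReal BigOperators

noncomputable section

open Set Finset

theorem Finset.sum_range_mul_le_sum_range_mul_of_antitone {a b w : ℕ → ℝ} {n : ℕ}
    (hw : Antitone w) (hw0 : ∀ i, 0 ≤ w i)
    (hab : ∀ k ≤ n, ∑ i ∈ range k, a i ≤ ∑ i ∈ range k, b i) :
    ∑ i ∈ range n, a i * w i ≤ ∑ i ∈ range n, b i * w i := by
  have hpartial : ∀ k ≤ n, 0 ≤ ∑ i ∈ range k, (b i - a i) := fun k hk => by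
    rw [sum_sub_distrib, sub_nonneg]; exact hab k hk
  have hparts := sum_range_by_parts w (fun i => b i - a i) n
  simp only [smul_eq_mul] at hparts
  have hdiff : ∑ i ∈ range n, b i * w i - ∑ i ∈ range n, a i * w i =
      ∑ i ∈ range n, w i * (b i - a i) := by
    rw [← sum_sub_distrib]; exact sum_congr rfl fun i _ => by ring
  rw [← sub_nonneg, hdiff, hparts]
  refine sub_nonneg.2 ((sum_nonpos fun i hi => ?_).trans
    (mul_nonneg (hw0 _) (hpartial n le_rfl)))
  have hi : i + 1 ≤ n := by rw [Finset.mem_range] at hi; omega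
  exact mul_nonpos_of_nonpos_of_nonneg (sub_nonpos.2 (hw i.le_succ)) (hpartial _ hi)

section Nonoverlapping

variable {ι α : Type*} [LinearOrder α]

def NonoverlappingIn (s : Finset ι) (I : ι → α × α) (u v : α) : Prop :=
  (∀ i ∈ s, u ≤ (I i).1 ∧ (I i).1 < (I i).2 ∧ (I i).2 ≤ v) ∧
    (s : Set ι).Pairwise fun i j => (I i).2 ≤ (I j).1 ∨ (I j).2 ≤ (I i).1

variable {s s' : Finset ι} {I : ι → α × α} {u u' v v' : α}

theorem NonoverlappingIn.mono (h : NonoverlappingIn s I u v) (hs : s' ⊆ s) (hu : u' ≤ u)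
    (hv : v ≤ v') : NonoverlappingIn s' I u' v' := by
  refine ⟨fun i hi => ?_, h.2.mono hs⟩
  obtain ⟨hui, hlt, hiv⟩ := h.1 i (hs hi)
  exact ⟨hu.trans hui, hlt, hiv.trans hv⟩

theorem NonoverlappingIn.of_insert [DecidableEq ι] {j : ι}
    (h : NonoverlappingIn (insert j s) I u v) (hj : j ∉ s)
    (hmax : ∀ i ∈ s, (I i).1 ≤ (I j).1) :
    NonoverlappingIn s I u (I j).1 := by
  refine ⟨fun i hi => ?_, h.2.mono (Finset.subset_insert j s)⟩
  obtain ⟨hui, hlt, -⟩ := h.1 i (mem_insert_of_mem hi)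
  refine ⟨hui, hlt, ?_⟩
  have hij : i ≠ j := fun hij => hj (hij ▸ hi)
  refine (h.2 (mem_insert_of_mem hi) (mem_insert_self j s) hij).resolve_right fun hji => ?_
  exact (hmax i hi).not_gt ((h.1 j (mem_insert_self j s)).2.1.trans_le hji)

theorem Nonoverlapping.nonoverlappingIn_range {n : ℕ} {I : Fin n → ℝ × ℝ}
    (hI : Nonoverlapping I) :
    NonoverlappingIn (range n) (fun i => if hi : i < n then I ⟨i, hi⟩ else 0) 0 (2 * π) := by
  refine ⟨fun i hi => ?_, fun i hi j hj hij => ?_⟩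
  · rw [Finset.mem_range] at hi
    simpa [hi] using hI.1 ⟨i, hi⟩
  · simp only [coe_range, Set.mem_Iio] at hi hj
    simpa [hi, hj] using hI.2 ⟨i, hi⟩ ⟨j, hj⟩ (by simpa [Fin.ext_iff] using hij)

theorem eVariationOn_Icc_add_Icc {E : Type*} [PseudoEMetricSpace E] (f : α → E) {a b c : α}
    (hab : a ≤ b) (hbc : b ≤ c) :
    eVariationOn f (Icc a b) + eVariationOn f (Icc b c) = eVariationOn f (Icc a c) := by
  simpa only [Set.univ_inter] using eVariationOn.Icc_add_Icc f hab hbc (mem_univ b)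

theorem NonoverlappingIn.sum_edist_le_eVariationOn [DecidableEq ι] {E : Type*}
    [PseudoEMetricSpace E] (f : α → E) (h : NonoverlappingIn s I u v) :
    ∑ i ∈ s, edist (f (I i).2) (f (I i).1) ≤ eVariationOn f (Icc u v) := by
  induction s using Finset.induction_on_max_value (fun i => (I i).1) generalizing v with
  | empty => simp
  | insert j s hj hmax ih =>
    obtain ⟨huj, hlt, hjv⟩ := h.1 j (mem_insert_self j s)
    rw [sum_insert hj, add_comm]
    calc ∑ i ∈ s, edist (f (I i).2) (f (I i).1) + edist (f (I j).2) (f (I j).1)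
        ≤ eVariationOn f (Icc u (I j).1) + eVariationOn f (Icc (I j).1 v) :=
          add_le_add (ih (h.of_insert hj hmax))
            (eVariationOn.edist_le f ⟨hlt.le, hjv⟩ ⟨le_rfl, hlt.le.trans hjv⟩)
      _ = eVariationOn f (Icc u v) := eVariationOn_Icc_add_Icc f huj (hlt.le.trans hjv)

theorem NonoverlappingIn.ofReal_sum_abs_sub_le_eVariationOn [DecidableEq ι] (f : α → ℝ)
    (h : NonoverlappingIn s I u v) :
    ENNReal.ofReal (∑ i ∈ s, |f (I i).2 - f (I i).1|) ≤ eVariationOn f (Icc u v) := by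
  rw [ENNReal.ofReal_sum_of_nonneg fun _ _ => abs_nonneg _]
  simpa only [edist_dist, Real.dist_eq] using h.sum_edist_le_eVariationOn f

end Nonoverlapping

theorem eVariationOn_neg {α : Type*} [LinearOrder α] (f : α → ℝ) (s : Set α) :
    eVariationOn (fun x => -f x) s = eVariationOn f s := by
  simp only [eVariationOn, edist_neg_neg]

theorem AntitoneOn.eVariationOn_eq {α : Type*} [LinearOrder α] {f : α → ℝ} {s : Set α}
    {a b : α} (hf : AntitoneOn f s) (as : a ∈ s) (bs : b ∈ s) :
    eVariationOn f (s ∩ Icc a b) = .ofReal (f a - f b) := by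
  rw [← eVariationOn_neg, hf.neg.eVariationOn_eq as bs, neg_sub_neg]

theorem exists_le_and_lt_succ {α : Type*} [LinearOrder α] {t : ℕ → α} {x : α} {n : ℕ}
    (h0 : t 0 ≤ x) (hn : x < t n) : ∃ r < n, t r ≤ x ∧ x < t (r + 1) := by
  classical
  have hex : ∃ k, x < t k := ⟨n, hn⟩
  have hk : Nat.find hex ≠ 0 := fun hk => (Nat.find_spec hex).not_ge (hk ▸ h0)
  obtain ⟨r, hr⟩ := Nat.exists_eq_succ_of_ne_zero hk
  have hspec := Nat.find_spec hex
  rw [hr] at hspec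
  refine ⟨r, ?_, not_lt.1 (Nat.find_min hex (by omega)), hspec⟩
  have := Nat.find_min' hex hn
  omega

theorem mem_uIcc_of_abs_sub_le {a b c : ℝ} (hdir : a ≤ b ∧ c ≤ b ∨ b ≤ a ∧ b ≤ c)
    (habs : |c - b| ≤ |b - a|) : c ∈ uIcc a b := by
  rcases hdir with ⟨hab, hcb⟩ | ⟨hba, hbc⟩
  · rw [abs_of_nonpos (sub_nonpos.2 hcb), abs_of_nonneg (sub_nonneg.2 hab)] at habs
    exact Icc_subset_uIcc ⟨by linarith, hcb⟩
  · rw [abs_of_nonneg (sub_nonneg.2 hbc), abs_of_nonpos (sub_nonpos.2 hba)] at habs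
    exact Icc_subset_uIcc' ⟨hbc, by linarith⟩

structure NestedMonotonePieces (g : ℝ → ℝ) (t : ℕ → ℝ) : Prop where
  monotone : Monotone t
  monotoneOn_or_antitoneOn : ∀ p,
    MonotoneOn g (Icc (t p) (t (p + 1))) ∨ AntitoneOn g (Icc (t p) (t (p + 1)))
  mem_uIcc : ∀ p, g (t (p + 2)) ∈ uIcc (g (t p)) (g (t (p + 1)))

namespace NestedMonotonePieces

variable {g : ℝ → ℝ} {t : ℕ → ℝ}

theorem of_zigzag {N : ℕ} (hlt : ∀ i < N, t i < t (i + 1))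
    (hg : ∀ i < N, (i % 2 = 0 → MonotoneOn g (Icc (t i) (t (i + 1)))) ∧
      (i % 2 = 1 → AntitoneOn g (Icc (t i) (t (i + 1)))))
    (hosc : ∀ i, i + 2 ≤ N → |g (t (i + 2)) - g (t (i + 1))| ≤ |g (t (i + 1)) - g (t i)|) :
    NestedMonotonePieces g (fun p => t (min p N)) := by
  have hend : ∀ i < N, (i % 2 = 0 → g (t i) ≤ g (t (i + 1))) ∧
      (i % 2 = 1 → g (t (i + 1)) ≤ g (t i)) := fun i hi => by
    have hle := (hlt i hi).le
    exact ⟨fun he => (hg i hi).1 he (left_mem_Icc.2 hle) (right_mem_Icc.2 hle) hle,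
      fun ho => (hg i hi).2 ho (left_mem_Icc.2 hle) (right_mem_Icc.2 hle) hle⟩
  refine ⟨monotone_nat_of_le_succ fun p => ?_, fun p => ?_, fun p => ?_⟩
  · rcases lt_or_ge p N with hp | hp
    · simpa only [min_eq_left hp.le, min_eq_left (Nat.succ_le_of_lt hp)] using (hlt p hp).le
    · simp only [min_eq_right hp, min_eq_right (hp.trans p.le_succ), le_rfl]
  · rcases lt_or_ge p N with hp | hp
    · simp only [min_eq_left hp.le, min_eq_left (Nat.succ_le_of_lt hp)]
      rcases Nat.mod_two_eq_zero_or_one p with he | ho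
      · exact .inl ((hg p hp).1 he)
      · exact .inr ((hg p hp).2 ho)
    · simp only [min_eq_right hp, min_eq_right (hp.trans p.le_succ), Set.Icc_self]
      exact .inl (Set.subsingleton_singleton.monotoneOn g)
  · rcases le_or_gt (p + 2) N with hp | hp
    · simp only [min_eq_left hp, min_eq_left (show p + 1 ≤ N by omega),
        min_eq_left (show p ≤ N by omega)]
      refine mem_uIcc_of_abs_sub_le ?_ (hosc p hp)
      rcases Nat.mod_two_eq_zero_or_one p with he | ho
      · exact .inl ⟨(hend p (by omega)).1 he, (hend (p + 1) (by omega)).2 (by omega)⟩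
      · exact .inr ⟨(hend p (by omega)).2 ho, (hend (p + 1) (by omega)).1 (by omega)⟩
    · simp only [min_eq_right (show N ≤ p + 2 by omega),
        min_eq_right (show N ≤ p + 1 by omega)]
      exact Set.right_mem_uIcc

variable (h : NestedMonotonePieces g t)
include h

theorem mem_uIcc_of_mem_piece {p : ℕ} {x : ℝ} (hx : x ∈ Icc (t p) (t (p + 1))) :
    g x ∈ uIcc (g (t p)) (g (t (p + 1))) := by
  have hle := hx.1.trans hx.2
  rcases h.monotoneOn_or_antitoneOn p with hm | ha
  · exact Icc_subset_uIcc ⟨hm (left_mem_Icc.2 hle) hx hx.1, hm hx (right_mem_Icc.2 hle) hx.2⟩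
  · exact Icc_subset_uIcc' ⟨ha hx (right_mem_Icc.2 hle) hx.2, ha (left_mem_Icc.2 hle) hx hx.1⟩

theorem mem_uIcc_of_mem_Icc_add (k : ℕ) :
    ∀ p, ∀ x ∈ Icc (t p) (t (p + k)), g x ∈ uIcc (g (t p)) (g (t (p + 1))) := by
  induction k with
  | zero =>
    intro p x hx
    rw [le_antisymm hx.2 hx.1]
    exact left_mem_uIcc
  | succ k ih =>
    intro p x hx
    rcases le_or_gt x (t (p + 1)) with hxp | hxp
    · exact h.mem_uIcc_of_mem_piece ⟨hx.1, hxp⟩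
    · refine uIcc_subset_uIcc right_mem_uIcc (h.mem_uIcc p) (ih (p + 1) x ⟨hxp.le, ?_⟩)
      rw [add_right_comm]; exact hx.2

theorem abs_sub_le_of_mem_Icc {p n : ℕ} (hpn : p ≤ n) {a b : ℝ} (ha : a ∈ Icc (t p) (t n))
    (hb : b ∈ Icc (t p) (t n)) : |g b - g a| ≤ |g (t (p + 1)) - g (t p)| := by
  obtain ⟨k, rfl⟩ := Nat.exists_eq_add_of_le hpn
  exact abs_sub_le_of_uIcc_subset_uIcc
    (uIcc_subset_uIcc (h.mem_uIcc_of_mem_Icc_add k p a ha) (h.mem_uIcc_of_mem_Icc_add k p b hb))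

theorem antitone_abs_sub : Antitone fun p => |g (t (p + 1)) - g (t p)| :=
  antitone_nat_of_succ_le fun p =>
    abs_sub_le_of_uIcc_subset_uIcc (uIcc_subset_uIcc right_mem_uIcc (h.mem_uIcc p))

theorem eVariationOn_le (n : ℕ) :
    eVariationOn g (Icc (t 0) (t n)) ≤
      .ofReal (∑ p ∈ range n, |g (t (p + 1)) - g (t p)|) := by
  rw [← eVariationOn.sum' g h.monotone, ENNReal.ofReal_sum_of_nonneg fun _ _ => abs_nonneg _]
  refine sum_le_sum fun p _ => ?_
  have hle := h.monotone p.le_succ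
  rw [← Set.inter_self (Icc _ _)]
  rcases h.monotoneOn_or_antitoneOn p with hm | ha
  · rw [hm.eVariationOn_eq (left_mem_Icc.2 hle) (right_mem_Icc.2 hle)]
    exact ENNReal.ofReal_le_ofReal (le_abs_self _)
  · rw [ha.eVariationOn_eq (left_mem_Icc.2 hle) (right_mem_Icc.2 hle)]
    exact ENNReal.ofReal_le_ofReal ((le_abs_self _).trans_eq (abs_sub_comm _ _))

theorem ofReal_abs_sub_le_eVariationOn_add {r n : ℕ} (hrn : r < n) {a b : ℝ}
    (ha : a ≤ t (r + 1)) (hab : a ≤ b) (hb : b ≤ t n) :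
    ENNReal.ofReal |g b - g a| ≤
      eVariationOn g (Icc a (t (r + 1))) + ENNReal.ofReal |g (t (r + 2)) - g (t (r + 1))| := by
  rcases le_or_gt b (t (r + 1)) with hbr | hbr
  · refine le_add_right ?_
    simpa only [edist_dist, Real.dist_eq] using
      eVariationOn.edist_le g (s := Icc a (t (r + 1))) ⟨hab, hbr⟩ ⟨le_rfl, ha⟩
  · calc ENNReal.ofReal |g b - g a|
        ≤ ENNReal.ofReal |g (t (r + 1)) - g a| + ENNReal.ofReal |g b - g (t (r + 1))| := by
          rw [← ENNReal.ofReal_add (abs_nonneg _) (abs_nonneg _)]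
          exact ENNReal.ofReal_le_ofReal ((abs_sub_le _ _ _).trans_eq (add_comm _ _))
      _ ≤ _ := by
          refine add_le_add ?_ (ENNReal.ofReal_le_ofReal ?_)
          · simpa only [edist_dist, Real.dist_eq] using
              eVariationOn.edist_le g (s := Icc a (t (r + 1))) ⟨ha, le_rfl⟩ ⟨le_rfl, ha⟩
          · exact h.abs_sub_le_of_mem_Icc hrn ⟨le_rfl, h.monotone hrn⟩ ⟨hbr.le, hb⟩

theorem sum_abs_sub_add_abs_sub_le {ι : Type*} [DecidableEq ι] {s : Finset ι}
    {I : ι → ℝ × ℝ} {r n : ℕ} (hrn : r < n) {a b : ℝ}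
    (hs : NonoverlappingIn s I (t 0) a) (h0a : t 0 ≤ a) (ha : a ≤ t (r + 1)) (hab : a ≤ b)
    (hb : b ≤ t n) :
    ∑ i ∈ s, |g (I i).2 - g (I i).1| + |g b - g a| ≤
      ∑ p ∈ range (r + 2), |g (t (p + 1)) - g (t p)| := by
  refine (ENNReal.ofReal_le_ofReal_iff (sum_nonneg fun _ _ => abs_nonneg _)).1 ?_
  calc ENNReal.ofReal (∑ i ∈ s, |g (I i).2 - g (I i).1| + |g b - g a|)
      ≤ ENNReal.ofReal (∑ i ∈ s, |g (I i).2 - g (I i).1|) + ENNReal.ofReal |g b - g a| :=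
        ENNReal.ofReal_add_le
    _ ≤ eVariationOn g (Icc (t 0) a) + (eVariationOn g (Icc a (t (r + 1))) +
          ENNReal.ofReal |g (t (r + 2)) - g (t (r + 1))|) :=
        add_le_add (hs.ofReal_sum_abs_sub_le_eVariationOn g)
          (h.ofReal_abs_sub_le_eVariationOn_add hrn ha hab hb)
    _ = eVariationOn g (Icc (t 0) (t (r + 1))) +
          ENNReal.ofReal |g (t (r + 2)) - g (t (r + 1))| := by
        rw [← add_assoc, eVariationOn_Icc_add_Icc g h0a ha]
    _ ≤ ENNReal.ofReal (∑ p ∈ range (r + 1), |g (t (p + 1)) - g (t p)|) +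
          ENNReal.ofReal |g (t (r + 2)) - g (t (r + 1))| :=
        add_le_add_left (h.eVariationOn_le _) _
    _ = ENNReal.ofReal (∑ p ∈ range (r + 2), |g (t (p + 1)) - g (t p)|) := by
        rw [sum_range_succ _ (r + 1),
          ENNReal.ofReal_add (sum_nonneg fun _ _ => abs_nonneg _) (abs_nonneg _)]

theorem sum_abs_sub_le_sum_range_card {ι : Type*} [DecidableEq ι] {s : Finset ι}
    {I : ι → ℝ × ℝ} {n : ℕ} (hs : NonoverlappingIn s I (t 0) (t n)) :
    ∑ i ∈ s, |g (I i).2 - g (I i).1| ≤ ∑ p ∈ range #s, |g (t (p + 1)) - g (t p)| := by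
  induction s using Finset.induction_on_max_value (fun i => (I i).1) with
  | empty => simp
  | insert j s hj hmax ih =>
    obtain ⟨h0a, hab, hbn⟩ := hs.1 j (mem_insert_self j s)
    have hs' := hs.of_insert hj hmax
    obtain ⟨r, hrn, hra, har⟩ := exists_le_and_lt_succ h0a (hab.trans_le hbn)
    rw [sum_insert hj, card_insert_of_notMem hj, add_comm]
    rcases le_or_gt #s r with hsr | hrs
    · rw [sum_range_succ]
      refine add_le_add (ih (hs'.mono subset_rfl le_rfl (hab.le.trans hbn))) ?_
      exact (h.abs_sub_le_of_mem_Icc hrn.le ⟨hra, hab.le.trans hbn⟩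
        ⟨hra.trans hab.le, hbn⟩).trans (h.antitone_abs_sub hsr)
    · exact (h.sum_abs_sub_add_abs_sub_le hrn hs' h0a har.le hab.le hbn).trans
        (sum_le_sum_of_subset_of_nonneg (range_subset_range.2 (by omega))
          fun _ _ _ => abs_nonneg _)

theorem VarG_le_tsum {N : ℕ} (h0 : t 0 ≤ 0) (hN : 2 * π ≤ t N) {Λ : ℕ → ℝ}
    (hΛpos : ∀ n, 0 < Λ (n + 1)) (hΛmono : ∀ n, Λ (n + 1) ≤ Λ (n + 2)) :
    VarG Λ g ≤ ∑' p, ENNReal.ofReal (|g (t (p + 1)) - g (t p)| / Λ (p + 1)) := by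
  refine iSup₂_le fun n I => ?_
  set J : ℕ → ℝ × ℝ := fun i => if hi : i < n then I.1 ⟨i, hi⟩ else 0 with hJ_def
  have hJ : NonoverlappingIn (range n) J (t 0) (t N) :=
    I.2.nonoverlappingIn_range.mono subset_rfl h0 hN
  have hw : Antitone fun i => (Λ (i + 1))⁻¹ :=
    antitone_nat_of_succ_le fun i => inv_anti₀ (hΛpos i) (hΛmono i)
  calc ∑ i : Fin n, ENNReal.ofReal (|g (I.1 i).2 - g (I.1 i).1| / Λ (i + 1))
      = ENNReal.ofReal (∑ i ∈ range n, |g (J i).2 - g (J i).1| * (Λ (i + 1))⁻¹) := by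
        rw [ENNReal.ofReal_sum_of_nonneg fun i _ => mul_nonneg (abs_nonneg _)
          (inv_nonneg.2 (hΛpos i).le), ← Fin.sum_univ_eq_sum_range]
        simp [hJ_def, div_eq_mul_inv]
    _ ≤ ENNReal.ofReal (∑ p ∈ range n, |g (t (p + 1)) - g (t p)| * (Λ (p + 1))⁻¹) := by
        refine ENNReal.ofReal_le_ofReal (sum_range_mul_le_sum_range_mul_of_antitone hw
          (fun i => inv_nonneg.2 (hΛpos i).le) fun k hk => ?_)
        simpa only [card_range] using
          h.sum_abs_sub_le_sum_range_card (hJ.mono (range_subset_range.2 hk) le_rfl le_rfl)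
    _ = ∑ p ∈ range n, ENNReal.ofReal (|g (t (p + 1)) - g (t p)| / Λ (p + 1)) := by
        rw [ENNReal.ofReal_sum_of_nonneg fun p _ => mul_nonneg (abs_nonneg _)
          (inv_nonneg.2 (hΛpos p).le)]
        simp only [div_eq_mul_inv]
    _ ≤ _ := ENNReal.sum_le_tsum _

end NestedMonotonePieces

theorem sum_range_le_VarG (g : ℝ → ℝ) (Λ : ℕ → ℝ) {t : ℕ → ℝ} {N : ℕ}
    (ht : Monotone t) (hlt : ∀ p < N, t p < t (p + 1)) (h0 : 0 ≤ t 0) (hN : t N ≤ 2 * π) :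
    ∑ p ∈ range N, ENNReal.ofReal (|g (t (p + 1)) - g (t p)| / Λ (p + 1)) ≤ VarG Λ g := by
  have hI : Nonoverlapping fun i : Fin N => (t i, t (i + 1)) :=
    ⟨fun i => ⟨h0.trans (ht (Nat.zero_le _)), hlt i i.2, (ht i.2).trans hN⟩,
      fun i j hij => (lt_or_gt_of_ne (Fin.val_ne_of_ne hij)).imp (fun h => ht h)
        fun h => ht h⟩
  rw [← Fin.sum_univ_eq_sum_range]
  exact le_iSup₂_of_le (f := fun n (I : {I : Fin n → ℝ × ℝ // Nonoverlapping I}) =>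
    ∑ i : Fin n, ENNReal.ofReal (|g (I.1 i).2 - g (I.1 i).1| / Λ (i.1 + 1))) N ⟨_, hI⟩ le_rfl

theorem statement16_general (g : ℝ → ℝ) (m : ℕ) (t : ℕ → ℝ)
    (ht0 : t 0 = 0) (htlast : t (2 * m - 1) = 2 * π)
    (htmono : ∀ i : ℕ, i + 1 < 2 * m → t i < t (i + 1))
    (hg : ∀ i : ℕ, i + 1 < 2 * m →
      (i % 2 = 0 → MonotoneOn g (Set.Icc (t i) (t (i + 1)))) ∧
      (i % 2 = 1 → AntitoneOn g (Set.Icc (t i) (t (i + 1)))))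
    (hosc : ∀ i : ℕ, i + 2 < 2 * m →
      |g (t (i + 2)) - g (t (i + 1))| < |g (t (i + 1)) - g (t i)|)
    (Λ : ℕ → ℝ) (hΛpos : ∀ n, 0 < Λ (n + 1)) (hΛmono : ∀ n, Λ (n + 1) ≤ Λ (n + 2)) :
    VarG Λ g =
      ENNReal.ofReal (∑ i ∈ Finset.range (2 * m - 1),
        |g (t (i + 1)) - g (t i)| / Λ (i + 1)) := by
  set N := 2 * m - 1
  -- freezing `t` after `N` makes the oscillations beyond the last piece vanish
  set t' : ℕ → ℝ := fun p => t (min p N) with ht'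
  have hpieces : NestedMonotonePieces g t' :=
    .of_zigzag (fun i hi => htmono i (by omega)) (fun i hi => hg i (by omega))
      fun i hi => (hosc i (by omega)).le
  have h0 : t' 0 = 0 := by simp [ht', ht0]
  have hN : t' N = 2 * π := by simp [ht', htlast]
  have hterm : ∀ p ∈ range N, ENNReal.ofReal (|g (t' (p + 1)) - g (t' p)| / Λ (p + 1)) =
      ENNReal.ofReal (|g (t (p + 1)) - g (t p)| / Λ (p + 1)) := fun p hp => by
    rw [Finset.mem_range] at hp
    simp only [ht', min_eq_left hp.le, min_eq_left (Nat.succ_le_of_lt hp)]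
  rw [ENNReal.ofReal_sum_of_nonneg fun i _ => div_nonneg (abs_nonneg _) (hΛpos i).le,
    ← sum_congr rfl hterm]
  refine le_antisymm ((hpieces.VarG_le_tsum h0.le hN.ge hΛpos hΛmono).trans_eq
    (tsum_eq_sum fun p hp => ?_)) (sum_range_le_VarG g Λ hpieces.monotone ?_ h0.ge hN.le)
  · rw [Finset.mem_range, not_lt] at hp
    simp [ht', min_eq_right hp, min_eq_right (hp.trans p.le_succ)]
  · intro p hp
    simpa only [ht', min_eq_left hp.le, min_eq_left (Nat.succ_le_of_lt hp)] using
      htmono p (by omega)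

/-- if `g` is alternately increasing and decreasing on the intervals of
the partition `0 = t_1 < t_2 < … < t_{2m} = 2π` (here `0`-indexed as `t 0, …, t (2m-1)`)
and its successive oscillations strictly decrease, then for any nondecreasing positive
sequence `Λ` with `λ_n → ∞` the `Λ`-variation of `g` equals
`∑_{i=1}^{2m-1} |g(t_{i+1}) − g(t_i)|/λ_i`. -/
theorem statement16 (g : ℝ → ℝ) (m : ℕ) (hm : 1 ≤ m) (t : ℕ → ℝ)
    (ht0 : t 0 = 0) (htlast : t (2 * m - 1) = 2 * π)
    (htmono : ∀ i : ℕ, i + 1 < 2 * m → t i < t (i + 1))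
    (hg : ∀ i : ℕ, i + 1 < 2 * m →
      (i % 2 = 0 → MonotoneOn g (Set.Icc (t i) (t (i + 1)))) ∧
      (i % 2 = 1 → AntitoneOn g (Set.Icc (t i) (t (i + 1)))))
    (hosc : ∀ i : ℕ, i + 2 < 2 * m →
      |g (t (i + 2)) - g (t (i + 1))| < |g (t (i + 1)) - g (t i)|)
    (Λ : ℕ → ℝ) (hΛpos : ∀ n, 0 < Λ (n + 1)) (hΛmono : ∀ n, Λ (n + 1) ≤ Λ (n + 2))
    (hΛtop : Tendsto (fun n : ℕ => Λ (n + 1)) atTop atTop) :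
    VarG Λ g =
      ENNReal.ofReal (∑ i ∈ Finset.range (2 * m - 1),
        |g (t (i + 1)) - g (t i)| / Λ (i + 1)) :=
  statement16_general g m t ht0 htlast htmono hg hosc Λ hΛpos hΛmono
end
end
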